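/- Given an odd cover of K_n^(r) of size m and a vertex v, deleting from each complete r-partite r-graph the part containing v (or leaving it unchanged if no part contains v, in which case it covers no r-set containing v) yields an odd cover of K_{n−1}^(r−1) on the remaining vertices of size at most m. Consequently b_r(n) ≥ b_{r−1}(n−1), where b_r(n) denotes the odd cover number of K_n^(r). -/

import Mathlib

open Finset

/-- `e` is an edge of the complete `r`-partite `r`-graph with parts `P 0, ..., P (r-1)`:
it meets every part in exactly one vertex. -/
def IsEdge {α : Type*} [DecidableEq α] {r : ℕ} (P : Fin r → Finset α) (e : Finset α) : Prop :=
  ∀ i, (e ∩ P i).card = 1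

instance {α : Type*} [DecidableEq α] {r : ℕ} (P : Fin r → Finset α) (e : Finset α) :
    Decidable (IsEdge P e) :=
  inferInstanceAs (Decidable (∀ _, _))

/-- The family `H` of complete `r`-partite `r`-graphs (each given by `r` pairwise disjoint
parts inside `V`) is an odd cover of the complete `r`-graph on `V`: every `r`-subset of `V`
is an edge of an odd number of members. -/
def IsOddCoverOn {α : Type*} [DecidableEq α] (V : Finset α) {r m : ℕ}
    (H : Fin m → Fin r → Finset α) : Prop :=
  (∀ i j, H i j ⊆ V) ∧
  (∀ i, Pairwise (Function.onFun Disjoint (H i))) ∧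
  ∀ e ⊆ V, e.card = r → Odd ((Finset.univ.filter fun i => IsEdge (H i) e)).card

/-- `oddCoverNumber r n` is the odd cover number `b_r(n)` of `K_n^(r)`. -/
noncomputable def oddCoverNumber (r n : ℕ) : ℕ :=
  sInf {m | ∃ H : Fin m → Fin r → Finset (Fin n), IsOddCoverOn Finset.univ H}


lemma edge_mem_part {α : Type*} [DecidableEq α] {r : ℕ} {P : Fin r → Finset α}
    (hP : Pairwise (Function.onFun Disjoint P)) {e : Finset α} (he : e.card = r)
    (hE : IsEdge P e) {x : α} (hx : x ∈ e) : ∃ j, x ∈ P j := by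
  have hT : Finset.univ.biUnion (fun j => e ∩ P j) = e := by
    apply Finset.eq_of_subset_of_card_le
    · intro y hy
      simp only [mem_biUnion] at hy
      obtain ⟨j, _, hj⟩ := hy
      exact (mem_inter.mp hj).1
    · rw [Finset.card_biUnion]
      · rw [Finset.sum_congr rfl fun u _ => hE u]
        simp [he]
      · intro j _ k _ hjk
        exact Finset.disjoint_left.mpr fun y hy hy' =>
          Finset.disjoint_left.mp (hP hjk) (mem_inter.mp hy).2 (mem_inter.mp hy').2
  rw [← hT] at hx
  simp only [mem_biUnion] at hx
  obtain ⟨j, _, hj⟩ := hx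
  exact ⟨j, (mem_inter.mp hj).2⟩

instance {α : Type*} [DecidableEq α] {r : ℕ} (P : Fin r → Finset α) (e : Finset α) :
    Decidable (IsEdge P e) :=
  inferInstanceAs (Decidable (∀ _, _))

lemma link_lemma {α : Type*} [DecidableEq α] {V : Finset α} {r m : ℕ} (hr : 1 ≤ r)
    (H : Fin m → Fin (r + 1) → Finset α)
    (hH : IsOddCoverOn V H) (v : α) (hvV : v ∈ V) :
    ∃ H' : Fin m → Fin r → Finset α,
      (∀ i j, H' i j = ∅ ∨ ∃ j', H' i j = H i j' ∧ v ∉ H i j') ∧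
      IsOddCoverOn (V.erase v) H' := by
  classical
  obtain ⟨hsub, hdisj, hcov⟩ := hH
  refine ⟨fun i j => if h : ∃ j₀, v ∈ H i j₀ then H i (h.choose.succAbove j) else ∅, ?_, ?_, ?_, ?_⟩
  · intro i j
    by_cases h : ∃ j₀, v ∈ H i j₀
    · right
      refine ⟨h.choose.succAbove j, by simp [h], fun hv => ?_⟩
      exact Finset.disjoint_left.mp (hdisj i (Fin.succAbove_ne h.choose j)) hv h.choose_spec
    · left; simp [h]
  · intro i j
    by_cases h : ∃ j₀, v ∈ H i j₀
    · simp only [h, dif_pos]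
      intro x hx
      refine mem_erase.mpr ⟨fun hxv => ?_, hsub i _ (by exact hx)⟩
      subst hxv
      exact Finset.disjoint_left.mp (hdisj i (Fin.succAbove_ne h.choose j)) hx h.choose_spec
    · simp [h]
  · intro i
    intro j k hjk
    by_cases h : ∃ j₀, v ∈ H i j₀
    · simp only [Function.onFun, h, dif_pos]
      exact hdisj i (fun hc => hjk (Fin.succAbove_right_injective hc))
    · simp [Function.onFun, h]
  · intro e he hcard
    have hve : v ∉ e := fun hv => (mem_erase.mp (he hv)).1 rfl
    have hins : insert v e ⊆ V := by
      intro x hx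
      rcases mem_insert.mp hx with rfl | hx
      · exact hvV
      · exact (erase_subset v V) (he hx)
    have hinscard : (insert v e).card = r + 1 := by
      rw [card_insert_of_notMem hve, hcard]
    have key : ∀ i, (IsEdge (fun j => if h : ∃ j₀, v ∈ H i j₀ then H i (h.choose.succAbove j) else ∅) e
        ↔ IsEdge (H i) (insert v e)) := by
      intro i
      by_cases h : ∃ j₀, v ∈ H i j₀
      · set j₀ := h.choose with hj₀
        have hv : v ∈ H i j₀ := h.choose_spec
        simp only [h, dif_pos]
        have hP' : Pairwise (Function.onFun Disjoint (fun j => H i (j₀.succAbove j))) := by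
          intro a b hab
          exact hdisj i (Fin.succAbove_right_injective.ne hab)
        constructor
        · intro hE j'
          rcases eq_or_ne j' j₀ with heq | hne
          · subst heq
            have hempty : e ∩ H i j₀ = ∅ := by
              rw [eq_empty_iff_forall_notMem]
              intro x hx
              obtain ⟨j, hj⟩ := edge_mem_part hP' hcard hE (mem_inter.mp hx).1
              exact Finset.disjoint_left.mp (hdisj i (Fin.succAbove_ne j₀ j)) hj (mem_inter.mp hx).2
            rw [insert_inter_of_mem hv, hempty]
            simp
          · obtain ⟨j, rfl⟩ := Fin.exists_succAbove_eq hne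
            rw [insert_inter_of_notMem (fun hvp =>
              Finset.disjoint_left.mp (hdisj i (Fin.succAbove_ne j₀ j)) hvp hv)]
            exact hE j
        · intro hE j
          have := hE (j₀.succAbove j)
          rwa [insert_inter_of_notMem (fun hvp =>
            Finset.disjoint_left.mp (hdisj i (Fin.succAbove_ne j₀ j)) hvp hv)] at this
      · simp only [h, dif_neg, not_false_iff]
        constructor
        · intro hE
          exact absurd (hE ⟨0, hr⟩) (by simp)
        · intro hE
          obtain ⟨j₀, hj₀⟩ := edge_mem_part (hdisj i) hinscard hE (mem_insert_self v e)
          exact absurd ⟨j₀, hj₀⟩ h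
    have : (Finset.univ.filter fun i => IsEdge (fun j => if h : ∃ j₀, v ∈ H i j₀ then H i (h.choose.succAbove j) else ∅) e)
        = (Finset.univ.filter fun i => IsEdge (H i) (insert v e)) := by
      apply filter_congr
      intro i _
      simp [key i]
    convert hcov (insert v e) hins hinscard using 2
    convert this


lemma transport_lemma {r n m : ℕ}
    (H' : Fin m → Fin r → Finset (Fin (n + 1)))
    (hH' : IsOddCoverOn (Finset.univ.erase (Fin.last n)) H') :
    ∃ H'' : Fin m → Fin r → Finset (Fin n), IsOddCoverOn Finset.univ H'' := by
  classical
  obtain ⟨hsub, hdisj, hcov⟩ := hH'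
  have hinj : Set.InjOn Fin.castSucc (↑(Finset.univ : Finset (Fin n))) :=
    (Fin.castSucc_injective n).injOn
  refine ⟨fun i j => (H' i j).preimage Fin.castSucc (Fin.castSucc_injective n).injOn,
    fun i j => subset_univ _, ?_, ?_⟩
  · intro i j k hjk
    simp only [Function.onFun]
    rw [Finset.disjoint_left]
    intro x hx hx'
    rw [mem_preimage] at hx hx'
    exact Finset.disjoint_left.mp (hdisj i hjk) hx hx'
  · intro e _ hcard
    set f : Fin n ↪ Fin (n + 1) := ⟨Fin.castSucc, Fin.castSucc_injective n⟩ with hf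
    have hmap : ∀ S : Finset (Fin (n + 1)),
        e.map f ∩ S = (e ∩ S.preimage Fin.castSucc (Fin.castSucc_injective n).injOn).map f := by
      intro S
      ext x
      simp only [mem_inter, mem_map, mem_preimage, hf, Function.Embedding.coeFn_mk]
      constructor
      · rintro ⟨⟨y, hy, rfl⟩, hxS⟩
        exact ⟨y, ⟨hy, hxS⟩, rfl⟩
      · rintro ⟨y, ⟨hy, hyS⟩, rfl⟩
        exact ⟨⟨y, hy, rfl⟩, hyS⟩
    have hedge : ∀ i, (IsEdge (fun j => (H' i j).preimage Fin.castSucc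
        (Fin.castSucc_injective n).injOn) e ↔ IsEdge (H' i) (e.map f)) := by
      intro i
      constructor
      · intro hE j
        rw [hmap, card_map]
        exact hE j
      · intro hE j
        have := hE j
        rwa [hmap, card_map] at this
    have hfil : (Finset.univ.filter fun i => IsEdge (fun j => (H' i j).preimage Fin.castSucc
        (Fin.castSucc_injective n).injOn) e)
        = (Finset.univ.filter fun i => IsEdge (H' i) (e.map f)) := by
      apply filter_congr
      intro i _
      simp [hedge i]
    convert_to Odd (Finset.univ.filter fun i => IsEdge (H' i) (e.map f)).card using 2
    · convert hfil
    apply hcov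
    · intro x hx
      rw [mem_map] at hx
      obtain ⟨y, _, rfl⟩ := hx
      exact mem_erase.mpr ⟨(Fin.castSucc_lt_last y).ne, mem_univ _⟩
    · rw [card_map, hcard]

/-- Taking the link of a vertex `v` in an odd cover of `K_{n+1}^{(r+1)}` yields an odd cover of
the `(r)`-sets of the remaining `n` vertices, each member being either trivial or obtained from
the original parts not containing `v`. Consequently `b_{r+1}(n+1) ≥ b_r(n)`. -/
theorem stmt4 (r n m : ℕ) (hr : 1 ≤ r)
    (H : Fin m → Fin (r + 1) → Finset (Fin (n + 1)))
    (hH : IsOddCoverOn Finset.univ H) (v : Fin (n + 1)) :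
    (∃ H' : Fin m → Fin r → Finset (Fin (n + 1)),
      (∀ i j, H' i j = ∅ ∨ ∃ j', H' i j = H i j' ∧ v ∉ H i j') ∧
      IsOddCoverOn (Finset.univ.erase v) H') ∧
    oddCoverNumber r n ≤ oddCoverNumber (r + 1) (n + 1) := by
  constructor
  · exact link_lemma hr H hH v (mem_univ v)
  · have hne : {m' | ∃ H : Fin m' → Fin (r + 1) → Finset (Fin (n + 1)),
        IsOddCoverOn Finset.univ H}.Nonempty := ⟨m, H, hH⟩
    obtain ⟨H₀, hH₀⟩ := Nat.sInf_mem hne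
    obtain ⟨H', _, h2⟩ := link_lemma hr H₀ hH₀ (Fin.last n) (mem_univ _)
    obtain ⟨H'', hH''⟩ := transport_lemma H' h2
    exact Nat.sInf_le ⟨H'', hH''⟩
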